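/- For n ≥ 6, 1 ≤ k ≤ ⌊n/2⌋, and r in the open interval (r_k(n), r_{k-1}(n)) (with the convention r_0(n) = 2), the k-isolated cut has strictly greater weight than every other j-isolated cut: W^n(C_k;r) > W^n(C_j;r) for all j ∈ {1,...,⌊n/2⌋} with j ≠ k. -/
import Mathlib


open Finset

/-- Lexicographic index of edge (i,j), i<j, in K_n (1-based). -/
def idx (n i j : ℕ) : ℕ := (i - 1) * n - i * (i - 1) / 2 + (j - i)

/-- Geometric-weight cut value: sum over edges (i,j), 1 ≤ i < j ≤ n, crossing S,
of r^(N - idx(i,j)) where N = C(n,2). -/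
noncomputable def cutW (n : ℕ) (S : Finset ℕ) (r : ℝ) : ℝ :=
  ∑ i ∈ Finset.Icc 1 n, ∑ j ∈ Finset.Icc (i + 1) n,
    if (i ∈ S) ↔ (j ∈ S) then 0 else r ^ (n * (n - 1) / 2 - idx n i j)

/-- P^{n,k}(r) = W^n(C_k;r) - W^n(C_{k+1};r), where C_k = {1,...,k}. -/
noncomputable def P (n k : ℕ) (r : ℝ) : ℝ :=
  cutW n (Finset.Icc 1 k) r - cutW n (Finset.Icc 1 (k + 1)) r

lemma idx_lin (n i j : ℕ) (h1 : 1 ≤ i) (hin : i ≤ n) (hij : i ≤ j) :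
    2 * idx n i j + i * i + i + 2 * n = 2 * (i * n) + 2 * j := by
  obtain ⟨m, rfl⟩ : ∃ m, i = m + 1 := ⟨i - 1, by omega⟩
  unfold idx
  simp only [Nat.add_sub_cancel]
  set b := (m + 1) * m / 2 with hbdef
  have hb : 2 * b = (m + 1) * m :=
    Nat.mul_div_cancel' (even_iff_two_dvd.mp (by simpa [mul_comm] using Nat.even_mul_succ_self m))
  have hmn : m * (m + 1) ≤ m * n := Nat.mul_le_mul_left m hin
  have hble : b ≤ m * n := by
    have h2 : (m + 1) * m = m * (m + 1) := by ring
    omega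
  have hj : m + 1 ≤ j := hij
  have hbz : (2 : ℤ) * (b : ℤ) = (m + 1) * m := by exact_mod_cast hb
  zify [hble, hj]
  linear_combination (-1 : ℤ) * hbz

lemma idx_linz (n i j : ℕ) (h1 : 1 ≤ i) (hin : i ≤ n) (hij : i ≤ j) :
    2 * (idx n i j : ℤ) + i * i + i + 2 * n = 2 * (i * n) + 2 * j := by
  exact_mod_cast idx_lin n i j h1 hin hij

lemma two_N (n : ℕ) (hn : 1 ≤ n) : 2 * (n * (n - 1) / 2) = n * n - n := by
  obtain ⟨m, rfl⟩ : ∃ m, n = m + 1 := ⟨n - 1, by omega⟩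
  simp only [Nat.add_sub_cancel]
  have hb : 2 * ((m + 1) * m / 2) = (m + 1) * m :=
    Nat.mul_div_cancel' (even_iff_two_dvd.mp (by simpa [mul_comm] using Nat.even_mul_succ_self m))
  have h2 : (m + 1) * (m + 1) = (m + 1) * m + (m + 1) := by ring
  omega

lemma two_Nz (n : ℕ) (hn : 1 ≤ n) : 2 * ((n * (n - 1) / 2 : ℕ) : ℤ) = n * n - n := by
  set b := n * (n - 1) / 2 with hbdef
  have h : 2 * b = n * n - n := two_N n hn
  have hle : n ≤ n * n := Nat.le_mul_of_pos_left n (by omega)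
  have : ((2 * b : ℕ) : ℤ) = ((n * n - n : ℕ) : ℤ) := by rw [h]
  rw [Nat.cast_sub hle] at this
  push_cast at this ⊢
  linarith

lemma idx_le_N (n i j : ℕ) (h1 : 1 ≤ i) (hij : i < j) (hjn : j ≤ n) :
    idx n i j ≤ n * (n - 1) / 2 := by
  have A := idx_linz n i j h1 (by omega) (by omega)
  have Nz := two_Nz n (by omega)
  have h : (0 : ℤ) ≤ ((n : ℤ) - i) * ((n : ℤ) - i - 1) := by
    apply mul_nonneg <;> · have : i + 1 ≤ n := by omega
                           push_cast
                           omega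
  have hj : (j : ℤ) ≤ n := by exact_mod_cast hjn
  have : (idx n i j : ℤ) ≤ ((n * (n - 1) / 2 : ℕ) : ℤ) := by nlinarith [A, Nz, h, hj]
  exact_mod_cast this

lemma idx_mono_left (n i i' j : ℕ) (h1 : 1 ≤ i) (hii : i ≤ i') (hij : i' < j) (hjn : j ≤ n) :
    idx n i j ≤ idx n i' j := by
  have A := idx_linz n i j h1 (by omega) (by omega)
  have B := idx_linz n i' j (by omega) (by omega) (by omega)
  have h : (0 : ℤ) ≤ ((i' : ℤ) - i) * (2 * (n : ℤ) - i - i' - 1) := by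
    apply mul_nonneg
    · push_cast; omega
    · have : i + 1 ≤ n := by omega
      have : i' + 1 ≤ n := by omega
      push_cast; omega
  have : (idx n i j : ℤ) ≤ (idx n i' j : ℤ) := by nlinarith [A, B, h]
  exact_mod_cast this

lemma idx_lt_left (n i i' j : ℕ) (h1 : 1 ≤ i) (hii : i < i') (hij : i' < j) (hjn : j ≤ n) :
    idx n i j < idx n i' j := by
  have A := idx_linz n i j h1 (by omega) (by omega)
  have B := idx_linz n i' j (by omega) (by omega) (by omega)
  have h : (1 : ℤ) ≤ ((i' : ℤ) - i) * (2 * (n : ℤ) - i - i' - 1) := by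
    have h1' : (1 : ℤ) ≤ (i' : ℤ) - i := by push_cast; omega
    have h2' : (1 : ℤ) ≤ 2 * (n : ℤ) - i - i' - 1 := by
      have : i + 1 ≤ n := by omega
      have : i' + 1 ≤ n := by omega
      push_cast; omega
    nlinarith [h1', h2']
  have : (idx n i j : ℤ) < (idx n i' j : ℤ) := by nlinarith [A, B, h]
  exact_mod_cast this

lemma idx_lt_cross (n k j : ℕ) (hk : 1 ≤ k) (hj : k + 2 ≤ j) (hjn : j ≤ n) :
    idx n k (k + 1) < idx n (k + 1) j := by
  have A := idx_linz n k (k + 1) hk (by omega) (by omega)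
  have B := idx_linz n (k + 1) j (by omega) (by omega) (by omega)
  have hj' : (k : ℤ) + 2 ≤ (j : ℤ) := by exact_mod_cast hj
  have hn' : (k : ℤ) + 2 ≤ (n : ℤ) := by exact_mod_cast le_trans hj hjn
  have : (idx n k (k + 1) : ℤ) < (idx n (k + 1) j : ℤ) := by push_cast at A B ⊢; linarith
  exact_mod_cast this

lemma idx_succ_right (n i k : ℕ) (hik : i ≤ k + 1) :
    idx n i (k + 2) = idx n i (k + 1) + 1 := by
  unfold idx
  generalize (i - 1) * n - i * (i - 1) / 2 = c
  omega

lemma cutW_eq (n k : ℕ) (hk : k ≤ n) (r : ℝ) :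
    cutW n (Finset.Icc 1 k) r
      = ∑ i ∈ Ioc 0 k, ∑ j ∈ Ioc k n, r ^ (n * (n - 1) / 2 - idx n i j) := by
  unfold cutW
  have h1 : Finset.Icc 1 n = Ioc 0 n := Finset.Icc_add_one_left_eq_Ioc 0 n
  have h2 : ∀ i : ℕ, Finset.Icc (i + 1) n = Ioc i n := fun i => Finset.Icc_add_one_left_eq_Ioc i n
  rw [h1]
  simp only [h2]
  rw [← Finset.sum_Ioc_consecutive _ (Nat.zero_le k) hk]
  have hzero : ∀ i ∈ Ioc k n,
      (∑ j ∈ Ioc i n, if (i ∈ Finset.Icc 1 k) ↔ (j ∈ Finset.Icc 1 k) then (0:ℝ)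
        else r ^ (n * (n - 1) / 2 - idx n i j)) = 0 := by
    intro i hi
    rw [mem_Ioc] at hi
    apply Finset.sum_eq_zero
    intro j hj
    rw [mem_Ioc] at hj
    rw [if_pos]
    simp only [mem_Icc]
    constructor <;> intro <;> omega
  rw [Finset.sum_eq_zero hzero, add_zero]
  apply Finset.sum_congr rfl
  intro i hi
  rw [mem_Ioc] at hi
  rw [← Finset.sum_Ioc_consecutive _ hi.2 hk]
  have hz2 : ∀ j ∈ Ioc i k,
      (if (i ∈ Finset.Icc 1 k) ↔ (j ∈ Finset.Icc 1 k) then (0:ℝ)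
        else r ^ (n * (n - 1) / 2 - idx n i j)) = 0 := by
    intro j hj
    rw [mem_Ioc] at hj
    rw [if_pos]
    simp only [mem_Icc]
    constructor <;> intro <;> omega
  rw [Finset.sum_eq_zero hz2, zero_add]
  apply Finset.sum_congr rfl
  intro j hj
  rw [mem_Ioc] at hj
  rw [if_neg]
  simp only [mem_Icc]
  intro hiff
  omega

lemma P_eq (n k : ℕ) (hk1 : 1 ≤ k) (hkn : k + 1 ≤ n) (r : ℝ) :
    P n k r = (∑ i ∈ Ioc 0 k, r ^ (n * (n - 1) / 2 - idx n i (k + 1)))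
      - ∑ j ∈ Ioc (k + 1) n, r ^ (n * (n - 1) / 2 - idx n (k + 1) j) := by
  unfold P
  rw [cutW_eq n k (by omega) r, cutW_eq n (k + 1) hkn r]
  have h1 : ∀ i : ℕ, (∑ j ∈ Ioc k n, r ^ (n * (n - 1) / 2 - idx n i j))
      = r ^ (n * (n - 1) / 2 - idx n i (k + 1))
        + ∑ j ∈ Ioc (k + 1) n, r ^ (n * (n - 1) / 2 - idx n i j) := by
    intro i
    rw [← Finset.sum_Ioc_consecutive _ (Nat.le_succ k) hkn, Nat.Ioc_succ_singleton,
      Finset.sum_singleton]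
  simp only [h1]
  rw [Finset.sum_add_distrib]
  rw [← Finset.sum_Ioc_consecutive _ (Nat.zero_le k) (Nat.le_succ k), Nat.Ioc_succ_singleton,
    Finset.sum_singleton]
  ring

lemma P_mul_lt (n k : ℕ) (hk1 : 1 ≤ k) (hk2 : k + 2 ≤ n) {s t : ℝ} (hs : 0 < s) (hst : s < t) :
    P n k s * t ^ (n * (n - 1) / 2 - idx n k (k + 1))
      < P n k t * s ^ (n * (n - 1) / 2 - idx n k (k + 1)) := by
  have ht : 0 < t := hs.trans hst
  set N := n * (n - 1) / 2 with hN
  set M := N - idx n k (k + 1) with hM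
  rw [P_eq n k hk1 (by omega) s, P_eq n k hk1 (by omega) t, sub_mul, sub_mul,
    Finset.sum_mul, Finset.sum_mul, Finset.sum_mul, Finset.sum_mul]
  have hA : (∑ i ∈ Ioc 0 k, s ^ (N - idx n i (k + 1)) * t ^ M)
      ≤ ∑ i ∈ Ioc 0 k, t ^ (N - idx n i (k + 1)) * s ^ M := by
    apply Finset.sum_le_sum
    intro i hi
    rw [mem_Ioc] at hi
    have hle : M ≤ N - idx n i (k + 1) := by
      have := idx_mono_left n i k (k + 1) hi.1 hi.2 (by omega) (by omega)
      omega
    obtain ⟨c, hc⟩ := Nat.le.dest hle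
    rw [← hc, pow_add, pow_add]
    have hcc : s ^ c ≤ t ^ c := pow_le_pow_left₀ hs.le hst.le c
    have hp : (0:ℝ) ≤ s ^ M * t ^ M := by positivity
    calc s ^ M * s ^ c * t ^ M = s ^ M * t ^ M * s ^ c := by ring
      _ ≤ s ^ M * t ^ M * t ^ c := by exact mul_le_mul_of_nonneg_left hcc hp
      _ = t ^ M * t ^ c * s ^ M := by ring
  have hB : (∑ j ∈ Ioc (k + 1) n, t ^ (N - idx n (k + 1) j) * s ^ M)
      < ∑ j ∈ Ioc (k + 1) n, s ^ (N - idx n (k + 1) j) * t ^ M := by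
    apply Finset.sum_lt_sum_of_nonempty
    · rw [Finset.nonempty_Ioc]; omega
    intro j hj
    rw [mem_Ioc] at hj
    have hlt : N - idx n (k + 1) j < M := by
      have h1 := idx_lt_cross n k j hk1 (by omega) hj.2
      have h2 := idx_le_N n (k + 1) j (by omega) (by omega) hj.2
      have h3 := idx_le_N n k (k + 1) hk1 (by omega) (by omega)
      omega
    set F := N - idx n (k + 1) j with hF
    obtain ⟨d, hd⟩ := Nat.le.dest hlt.le
    have hd1 : 1 ≤ d := by omega
    rw [← hd, pow_add, pow_add]
    have hdd : s ^ d < t ^ d := pow_lt_pow_left₀ hst hs.le (by omega)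
    have hp : (0:ℝ) < s ^ F * t ^ F := by positivity
    calc t ^ F * (s ^ F * s ^ d) = s ^ F * t ^ F * s ^ d := by ring
      _ < s ^ F * t ^ F * t ^ d := by exact mul_lt_mul_of_pos_left hdd hp
      _ = s ^ F * (t ^ F * t ^ d) := by ring
  linarith

lemma P_pos (n k : ℕ) (hk1 : 1 ≤ k) (hk2 : k + 2 ≤ n) {ρ r : ℝ} (hρ : 0 < ρ)
    (hroot : P n k ρ = 0) (h : ρ < r) : 0 < P n k r := by
  have H := P_mul_lt n k hk1 hk2 hρ h
  rw [hroot, zero_mul] at H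
  have hp : (0:ℝ) < ρ ^ (n * (n - 1) / 2 - idx n k (k + 1)) := pow_pos hρ _
  nlinarith [H, hp]

lemma P_neg (n k : ℕ) (hk1 : 1 ≤ k) (hk2 : k + 2 ≤ n) {ρ r : ℝ} (hr : 0 < r)
    (hroot : P n k ρ = 0) (h : r < ρ) : P n k r < 0 := by
  have H := P_mul_lt n k hk1 hk2 hr h
  rw [hroot, zero_mul] at H
  have hp : (0:ℝ) < ρ ^ (n * (n - 1) / 2 - idx n k (k + 1)) := pow_pos (hr.trans h) _
  nlinarith [H, hp]

lemma key_cmp (n k : ℕ) (hk1 : 1 ≤ k) (hk : k + 3 ≤ n) {r : ℝ} (hr : 1 < r) :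
    P n k r < r * P n (k + 1) r := by
  have hr0 : 0 < r := by linarith
  set N := n * (n - 1) / 2 with hN
  rw [P_eq n k hk1 (by omega) r, P_eq n (k + 1) (by omega) (by omega) r,
    mul_sub, Finset.mul_sum, Finset.mul_sum]
  rw [Finset.sum_Ioc_succ_top (Nat.zero_le k)]
  have e1 : ∀ i ∈ Ioc 0 k, r * r ^ (N - idx n i (k + 2)) = r ^ (N - idx n i (k + 1)) := by
    intro i hi
    rw [mem_Ioc] at hi
    rw [← pow_succ']
    congr 1
    have h1 := idx_succ_right n i k (by omega)
    have h2 := idx_le_N n i (k + 2) hi.1 (by omega) (by omega)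
    omega
  rw [Finset.sum_congr rfl e1]
  have hb1 : (∑ j ∈ Ioc (k + 2) n, r * r ^ (N - idx n (k + 2) j))
      ≤ ∑ j ∈ Ioc (k + 2) n, r ^ (N - idx n (k + 1) j) := by
    apply Finset.sum_le_sum
    intro j hj
    rw [mem_Ioc] at hj
    rw [← pow_succ']
    apply pow_le_pow_right₀ hr.le
    have h1 := idx_lt_left n (k + 1) (k + 2) j (by omega) (by omega) (by omega) hj.2
    have h2 := idx_le_N n (k + 2) j (by omega) (by omega) hj.2
    omega
  have hb2 : (∑ j ∈ Ioc (k + 2) n, r ^ (N - idx n (k + 1) j))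
      ≤ ∑ j ∈ Ioc (k + 1) n, r ^ (N - idx n (k + 1) j) :=
    Finset.sum_le_sum_of_subset_of_nonneg (Finset.Ioc_subset_Ioc_left (by omega))
      (fun j _ _ => by positivity)
  have hpos : 0 < r * r ^ (N - idx n (k + 1) (k + 2)) := by positivity
  linarith

lemma telescope (n : ℕ) (r : ℝ) (k : ℕ) (d : ℕ) :
    cutW n (Finset.Icc 1 k) r - cutW n (Finset.Icc 1 (k + d)) r
      = ∑ i ∈ Ico k (k + d), P n i r := by
  induction d with
  | zero => simp
  | succ d ih =>
    rw [show k + (d + 1) = (k + d) + 1 from rfl,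
      Finset.sum_Ico_succ_top (Nat.le_add_right k d), ← ih]
    unfold P
    ring

/-- Main result: for n ≥ 6, 1 ≤ k ≤ ⌊n/2⌋, and r ∈ (r_k(n), r_{k-1}(n))
(with the conventions r_0(n) = 2 and r_{⌊n/2⌋}(n) = 1), the k-isolated cut
has strictly greater weight than every other j-isolated cut, j ∈ {1,...,⌊n/2⌋}. -/
theorem stmt_19 (n : ℕ) (hn : 6 ≤ n) (ρ : ℕ → ℝ)
    (hρ0 : ρ 0 = 2) (hρtop : ρ (n / 2) = 1)
    (hρ : ∀ k : ℕ, 1 ≤ k → k ≤ n / 2 - 1 →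
      ρ k ∈ Set.Ioo (1 : ℝ) 2 ∧ P n k (ρ k) = 0)
    (k : ℕ) (hk : 1 ≤ k) (hkn : k ≤ n / 2)
    (r : ℝ) (hr : r ∈ Set.Ioo (ρ k) (ρ (k - 1))) :
    ∀ j : ℕ, 1 ≤ j → j ≤ n / 2 → j ≠ k →
      cutW n (Finset.Icc 1 j) r < cutW n (Finset.Icc 1 k) r := by
  obtain ⟨hr1, hr2⟩ := hr
  -- step: adjacent roots are ordered
  have step : ∀ m : ℕ, 1 ≤ m → m + 1 ≤ n / 2 - 1 → ρ (m + 1) ≤ ρ m := by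
    intro m h1 h2
    obtain ⟨hm_mem, hm_root⟩ := hρ m h1 (by omega)
    obtain ⟨hm1_mem, hm1_root⟩ := hρ (m + 1) (by omega) h2
    by_contra hcon
    push_neg at hcon
    have hcmp := key_cmp n m h1 (by omega) hm_mem.1
    rw [hm_root] at hcmp
    have hneg := P_neg n (m + 1) (by omega) (by omega)
      (lt_trans one_pos hm_mem.1) hm1_root hcon
    nlinarith [hm_mem.1]
  have mono : ∀ a b : ℕ, 1 ≤ a → a ≤ b → b ≤ n / 2 - 1 → ρ b ≤ ρ a := by
    intro a b ha hab
    induction b, hab using Nat.le_induction with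
    | base => intro _; rfl
    | succ b hb ih =>
      intro hble
      exact le_trans (step b (by omega) hble) (ih (by omega))
  -- r > 1
  have hr_gt1 : 1 < r := by
    rcases le_or_gt k (n / 2 - 1) with h | h
    · exact lt_trans (hρ k hk h).1.1 hr1
    · have : k = n / 2 := by omega
      rw [this, hρtop] at hr1
      exact hr1
  have hr0 : 0 < r := by linarith
  intro j hj1 hj2 hjk
  rcases lt_or_gt_of_ne hjk with hlt | hgt
  · -- j < k
    have htel := telescope n r j (k - j)
    rw [show j + (k - j) = k by omega] at htel
    have hsum : (∑ i ∈ Ico j k, P n i r) < 0 := by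
      apply Finset.sum_neg
      · intro i hi
        rw [mem_Ico] at hi
        have hi1 : 1 ≤ i := le_trans hj1 hi.1
        have hi2 : i ≤ n / 2 - 1 := by omega
        obtain ⟨hmem, hroot⟩ := hρ i hi1 hi2
        have hge : ρ (k - 1) ≤ ρ i := mono i (k - 1) hi1 (by omega) (by omega)
        exact P_neg n i hi1 (by omega) hr0 hroot (lt_of_lt_of_le hr2 hge)
      · rw [Finset.nonempty_Ico]; omega
    linarith
  · -- j > k
    have htel := telescope n r k (j - k)
    rw [show k + (j - k) = j by omega] at htel
    have hsum : 0 < ∑ i ∈ Ico k j, P n i r := by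
      apply Finset.sum_pos
      · intro i hi
        rw [mem_Ico] at hi
        have hi1 : 1 ≤ i := le_trans hk hi.1
        have hi2 : i ≤ n / 2 - 1 := by omega
        obtain ⟨hmem, hroot⟩ := hρ i hi1 hi2
        have hle : ρ i ≤ ρ k := mono k i hk hi.1 hi2
        exact P_pos n i hi1 (by omega) (lt_trans one_pos hmem.1) hroot
          (lt_of_le_of_lt hle hr1)
      · rw [Finset.nonempty_Ico]; omega
    linarith
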